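/- arXiv:2402.19446 — 2 statements merged into one kernel-verified Lean document; each statement's English description precedes it below -/
import Mathlib

section
/- (Telescoping average Bellman residual) Let T be an operator on functions bounded in absolute value by R+1, mapping functions bounded by R to functions bounded by R+1, and let f_1,...,f_K be functions bounded by R with E_ν[(f_k − T f_{k-1})²] ≤ ε for all k ≥ 2. Then the average f̄ = (1/K)∑_{k=1}^K f_k satisfies E_ν[(f̄ − T f̄)²] ≤ 4(R+1)²/K + ε, provided T is affine in the sense that T f̄ = (1/K)∑_{k=1}^K T f_k. -/
open Finset

/-- Telescoping average Bellman residual: if `T` maps functions bounded by `R`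
to functions bounded by `R+1`, the iterates `f_1, …, f_K` are bounded by `R`
with `E_ν[(f_k − T f_{k-1})²] ≤ ε` for all `2 ≤ k ≤ K`, and `T` is affine so
that `T f̄ = (1/K)·∑_k T f_k` for the average `f̄ = (1/K)·∑_k f_k`, then
`E_ν[(f̄ − T f̄)²] ≤ 4(R+1)²/K + ε`. -/
theorem stmt_12 {X : Type*} [Fintype X]
    (T : (X → ℝ) → (X → ℝ)) (f : ℕ → X → ℝ) (fbar : X → ℝ)
    (ν : X → ℝ) (K : ℕ) (hK : 0 < K) (R ε : ℝ) (hR : 0 ≤ R) (hε : 0 ≤ ε)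
    (hν0 : ∀ x, 0 ≤ ν x) (hν1 : ∑ x, ν x = 1)
    (hfb : ∀ k ∈ Icc 1 K, ∀ x, |f k x| ≤ R)
    (hTb : ∀ h : X → ℝ, (∀ x, |h x| ≤ R) → ∀ x, |T h x| ≤ R + 1)
    (hres : ∀ k, 2 ≤ k → k ≤ K →
      ∑ x, ν x * (f k x - T (f (k - 1)) x) ^ 2 ≤ ε)
    (hbar : ∀ x, fbar x = (1 / (K : ℝ)) * ∑ k ∈ Icc 1 K, f k x)
    (haffine : ∀ x, T fbar x = (1 / (K : ℝ)) * ∑ k ∈ Icc 1 K, T (f k) x) :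
    ∑ x, ν x * (fbar x - T fbar x) ^ 2 ≤ 4 * (R + 1) ^ 2 / K + ε := by
  have hKr : (0:ℝ) < (K:ℝ) := by exact_mod_cast hK
  set σ : ℕ → ℕ := fun j => if j = 1 then K else j - 1 with hσ
  set g : ℕ → X → ℝ := fun j x => f j x - T (f (σ j)) x with hg
  -- permutation of the subtracted terms
  have hperm : ∀ x, ∑ j ∈ Icc 1 K, T (f (σ j)) x = ∑ i ∈ Icc 1 K, T (f i) x := by
    intro x
    refine Finset.sum_nbij' σ (fun i => if i = K then 1 else i + 1) ?_ ?_ ?_ ?_ ?_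
    · intro a ha; simp only [mem_Icc] at ha ⊢; simp only [hσ]; split <;> omega
    · intro a ha; simp only [mem_Icc] at ha ⊢; split <;> omega
    · intro a ha; simp only [mem_Icc] at ha; simp only [hσ]; split_ifs <;> omega
    · intro a ha; simp only [mem_Icc] at ha; simp only [hσ]; split_ifs <;> omega
    · intro a ha; rfl
  have hdecomp : ∀ x, fbar x - T fbar x = (1 / (K:ℝ)) * ∑ j ∈ Icc 1 K, g j x := by
    intro x
    rw [hbar, haffine, ← mul_sub]
    congr 1
    simp only [hg]
    rw [Finset.sum_sub_distrib, hperm x]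
  have hcard : (Icc 1 K).card = K := by rw [Nat.card_Icc]; omega
  -- pointwise Jensen
  have hjensen : ∀ x, (fbar x - T fbar x) ^ 2 ≤ (1 / (K:ℝ)) * ∑ j ∈ Icc 1 K, g j x ^ 2 := by
    intro x
    rw [hdecomp x, mul_pow]
    have h1 := sq_sum_le_card_mul_sum_sq (s := Icc 1 K) (f := fun j => g j x)
    rw [hcard] at h1
    calc (1 / (K:ℝ)) ^ 2 * (∑ j ∈ Icc 1 K, g j x) ^ 2
        ≤ (1 / (K:ℝ)) ^ 2 * ((K:ℝ) * ∑ j ∈ Icc 1 K, g j x ^ 2) := by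
          apply mul_le_mul_of_nonneg_left h1 (by positivity)
      _ = (1 / (K:ℝ)) * ∑ j ∈ Icc 1 K, g j x ^ 2 := by
          field_simp
  -- bound each term of the sum over j
  have hterm1 : ∑ x, ν x * g 1 x ^ 2 ≤ 4 * (R + 1) ^ 2 := by
    have hb : ∀ x, g 1 x ^ 2 ≤ 4 * (R + 1) ^ 2 := by
      intro x
      have h1 : |f 1 x| ≤ R := hfb 1 (by simp only [mem_Icc]; omega) x
      have h2 : |T (f K) x| ≤ R + 1 := hTb (f K) (hfb K (by simp only [mem_Icc]; omega) ) x
      have : |g 1 x| ≤ 2 * (R + 1) := by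
        simp only [hg, hσ, if_pos rfl]
        calc |f 1 x - T (f K) x| ≤ |f 1 x| + |T (f K) x| := abs_sub _ _
          _ ≤ R + (R + 1) := add_le_add h1 h2
          _ ≤ 2 * (R + 1) := by linarith
      calc g 1 x ^ 2 = |g 1 x| ^ 2 := (sq_abs _).symm
        _ ≤ (2 * (R + 1)) ^ 2 := by
            apply pow_le_pow_left₀ (abs_nonneg _) this
        _ = 4 * (R + 1) ^ 2 := by ring
    calc ∑ x, ν x * g 1 x ^ 2 ≤ ∑ x, ν x * (4 * (R + 1) ^ 2) := by
          apply Finset.sum_le_sum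
          intro x _
          exact mul_le_mul_of_nonneg_left (hb x) (hν0 x)
      _ = 4 * (R + 1) ^ 2 := by rw [← Finset.sum_mul, hν1, one_mul]
  have htermk : ∀ j ∈ Icc 2 K, ∑ x, ν x * g j x ^ 2 ≤ ε := by
    intro j hj
    simp only [mem_Icc] at hj
    have hne : j ≠ 1 := by omega
    have := hres j hj.1 hj.2
    simp only [hg, hσ, if_neg hne]
    exact this
  have hsplit : Icc 1 K = insert 1 (Icc 2 K) := by
    ext a; simp only [mem_Icc, mem_insert]; omega
  have hmain : ∑ j ∈ Icc 1 K, ∑ x, ν x * g j x ^ 2 ≤ 4 * (R + 1) ^ 2 + ((K:ℝ) - 1) * ε := by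
    rw [hsplit, Finset.sum_insert (by simp)]
    have h2 : ∑ j ∈ Icc 2 K, ∑ x, ν x * g j x ^ 2 ≤ ((K:ℝ) - 1) * ε := by
      calc ∑ j ∈ Icc 2 K, ∑ x, ν x * g j x ^ 2 ≤ ∑ j ∈ Icc 2 K, ε :=
            Finset.sum_le_sum htermk
        _ = ((Icc 2 K).card : ℝ) * ε := by rw [Finset.sum_const, nsmul_eq_mul]
        _ = ((K:ℝ) - 1) * ε := by
            rw [Nat.card_Icc]
            have : K + 1 - 2 = K - 1 := by omega
            rw [this]
            have : ((K - 1 : ℕ) : ℝ) = (K:ℝ) - 1 := by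
              have : (1:ℕ) ≤ K := hK
              push_cast [this]; ring
            rw [this]
    linarith [hterm1]
  calc ∑ x, ν x * (fbar x - T fbar x) ^ 2
      ≤ ∑ x, ν x * ((1 / (K:ℝ)) * ∑ j ∈ Icc 1 K, g j x ^ 2) := by
        apply Finset.sum_le_sum
        intro x _
        exact mul_le_mul_of_nonneg_left (hjensen x) (hν0 x)
    _ = (1 / (K:ℝ)) * ∑ j ∈ Icc 1 K, ∑ x, ν x * g j x ^ 2 := by
        have hpt : ∀ x : X, ν x * ((1 / (K:ℝ)) * ∑ j ∈ Icc 1 K, g j x ^ 2)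
            = ∑ j ∈ Icc 1 K, (1 / (K:ℝ)) * (ν x * g j x ^ 2) := by
          intro x
          rw [Finset.mul_sum, Finset.mul_sum]
          exact Finset.sum_congr rfl fun j _ => by ring
        simp_rw [hpt]
        rw [Finset.sum_comm]
        simp_rw [← Finset.mul_sum]
    _ ≤ (1 / (K:ℝ)) * (4 * (R + 1) ^ 2 + ((K:ℝ) - 1) * ε) := by
        apply mul_le_mul_of_nonneg_left hmain (by positivity)
    _ ≤ 4 * (R + 1) ^ 2 / K + ε := by
        have heq : 4 * (R + 1) ^ 2 / K + ε
            = (1 / (K:ℝ)) * (4 * (R + 1) ^ 2 + (K:ℝ) * ε) := by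
          field_simp
        rw [heq]
        apply mul_le_mul_of_nonneg_left _ (by positivity)
        nlinarith
end

section
/- If the per-round regression errors in fitted policy evaluation satisfy E_ν[(f_k − T^π f_{k-1})²] ≤ 256R²·log(2|F|K/δ)/M for k = 1,...,K, and all functions are bounded by R with T^π mapping into functions bounded by R+1, then the averaged function f̄ = (1/K)∑_k f_k satisfies E_{d^π}[(f̄ − T^π f̄)²] ≤ C_{ν,π}·(4(R+1)²/K + 256R²·log(2|F|K/δ)/M), where C_{ν,π} = max_{s,a} d^π(s,a)/ν(s,a). -/
open Finset

/-- Fitted policy evaluation guarantee: if the per-round regression errors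
satisfy `E_ν[(f_k − T f_{k-1})²] ≤ 256R²·log(2|F|K/δ)/M` for `k = 1,…,K`, all
functions in the finite class `F` are bounded by `R`, the affine Bellman
operator `T` maps functions bounded by `R` into functions bounded by `R+1`,
then the averaged function `f̄ = (1/K)·∑_k f_k` satisfies
`E_{d}[(f̄ − T f̄)²] ≤ C_{ν}·(4(R+1)²/K + 256R²·log(2|F|K/δ)/M)` where
`C_{ν} = max_x d(x)/ν(x)` and `d` is the occupancy measure of the policy. -/
theorem stmt_16 {X : Type*} [Fintype X] [Nonempty X]
    (T : (X → ℝ) → (X → ℝ)) (F : Finset (X → ℝ)) (f : ℕ → X → ℝ) (fbar : X → ℝ)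
    (ν d : X → ℝ) (K M : ℕ) (hK : 0 < K) (hM : 0 < M)
    (R δ : ℝ) (hR : 0 ≤ R) (hδ0 : 0 < δ) (hδ1 : δ < 1)
    -- `ν` is the offline distribution with full support, `d` the occupancy measure
    (hν0 : ∀ x, 0 < ν x) (hν1 : ∑ x, ν x = 1)
    (hd0 : ∀ x, 0 ≤ d x) (hd1 : ∑ x, d x = 1)
    -- the iterates lie in the finite class `F`, all of whose members are bounded by `R`
    (hfF : ∀ k ∈ Icc 1 K, f k ∈ F)
    (hFb : ∀ g ∈ F, ∀ x, |g x| ≤ R)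
    -- `T` maps functions bounded by `R` to functions bounded by `R+1` and is affine
    (hTb : ∀ h : X → ℝ, (∀ x, |h x| ≤ R) → ∀ x, |T h x| ≤ R + 1)
    (haffine : ∀ x, T fbar x = (1 / (K : ℝ)) * ∑ k ∈ Icc 1 K, T (f k) x)
    (hbar : ∀ x, fbar x = (1 / (K : ℝ)) * ∑ k ∈ Icc 1 K, f k x)
    -- per-round regression error bounds
    (hres : ∀ k, 2 ≤ k → k ≤ K →
      ∑ x, ν x * (f k x - T (f (k - 1)) x) ^ 2 ≤
        256 * R ^ 2 * Real.log (2 * F.card * K / δ) / M) :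
    ∑ x, d x * (fbar x - T fbar x) ^ 2 ≤
      (⨆ x, d x / ν x) *
        (4 * (R + 1) ^ 2 / K + 256 * R ^ 2 * Real.log (2 * F.card * K / δ) / M) := by
  have hKR : (0:ℝ) < K := by exact_mod_cast hK
  set ε : ℝ := 256 * R ^ 2 * Real.log (2 * F.card * K / δ) / M with hεdef
  set C : ℝ := ⨆ x, d x / ν x with hCdef
  -- ε is nonnegative
  have hf1F : f 1 ∈ F := hfF 1 (by simp only [Finset.mem_Icc]; omega)
  have hFcard : (1:ℝ) ≤ F.card := by
    have : 0 < F.card := Finset.card_pos.2 ⟨f 1, hf1F⟩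
    exact_mod_cast this
  have hlog : 0 ≤ Real.log (2 * F.card * K / δ) := by
    apply Real.log_nonneg
    rw [le_div_iff₀ hδ0]
    have hK1 : (1:ℝ) ≤ K := by exact_mod_cast hK
    nlinarith
  have hε0 : 0 ≤ ε := by
    apply div_nonneg _ (Nat.cast_nonneg M)
    have : (0:ℝ) ≤ 256 * R ^ 2 := by positivity
    exact mul_nonneg this hlog
  -- properties of C
  have hCx : ∀ x, d x / ν x ≤ C := fun x =>
    le_ciSup (f := fun x => d x / ν x)
      (Set.Finite.bddAbove (Set.finite_range _)) x
  obtain ⟨x₀⟩ := ‹Nonempty X›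
  have hC0 : 0 ≤ C :=
    le_trans (div_nonneg (hd0 x₀) (hν0 x₀).le) (hCx x₀)
  have hdC : ∀ x, d x ≤ C * ν x := fun x => (div_le_iff₀ (hν0 x)).1 (hCx x)
  -- the K summands
  set A : ℕ → X → ℝ := fun k x =>
    if k = 1 then f 1 x - T (f K) x else f k x - T (f (k - 1)) x with hAdef
  -- shift lemma
  have shift : ∀ g : ℕ → ℝ, ∑ k ∈ Icc 2 K, g (k - 1) = ∑ k ∈ Icc 1 (K - 1), g k := by
    intro g
    have hmap : (Icc 1 (K-1)).map (addRightEmbedding 1) = Icc 2 K := by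
      rw [Finset.map_add_right_Icc]
      congr 1
      omega
    rw [← hmap, Finset.sum_map]
    apply Finset.sum_congr rfl
    intro k hk
    simp [addRightEmbedding]
  -- telescoping identity
  have hid : ∀ x, fbar x - T fbar x = (1 / (K:ℝ)) * ∑ k ∈ Icc 1 K, A k x := by
    intro x
    rw [hbar x, haffine x, ← mul_sub]
    congr 1
    have h1 : ∑ k ∈ Icc 1 K, A k x = A 1 x + ∑ k ∈ Icc 2 K, A k x := by
      rw [← Finset.sum_erase_add _ _ (show 1 ∈ Icc 1 K by simp only [Finset.mem_Icc]; omega),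
        Finset.Icc_erase_left, ← Finset.Icc_add_one_left_eq_Ioc]
      ring
    have h2 : ∑ k ∈ Icc 2 K, A k x = ∑ k ∈ Icc 2 K, (f k x - T (f (k-1)) x) := by
      apply Finset.sum_congr rfl
      intro k hk
      have : k ≠ 1 := by simp at hk; omega
      simp [hAdef, this]
    have h3 : ∑ k ∈ Icc 1 K, f k x = f 1 x + ∑ k ∈ Icc 2 K, f k x := by
      rw [← Finset.sum_erase_add _ _ (show 1 ∈ Icc 1 K by simp only [Finset.mem_Icc]; omega),
        Finset.Icc_erase_left, ← Finset.Icc_add_one_left_eq_Ioc]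
      ring
    have h4 : ∑ k ∈ Icc 1 K, T (f k) x
        = (∑ k ∈ Icc 1 (K-1), T (f k) x) + T (f K) x := by
      have hK' : K = (K - 1) + 1 := by omega
      rw [hK', Finset.sum_Icc_succ_top (by omega : 1 ≤ K - 1 + 1)]
      rw [← hK']
    have h5 : ∑ k ∈ Icc 2 K, T (f (k-1)) x = ∑ k ∈ Icc 1 (K-1), T (f k) x :=
      shift (fun k => T (f k) x)
    rw [h1, h2, Finset.sum_sub_distrib, h5, h3, h4]
    simp [hAdef]
    ring
  -- bounds on the summands under ν
  have hbound1 : ∑ x, ν x * (A 1 x) ^ 2 ≤ 4 * (R + 1) ^ 2 := by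
    calc ∑ x, ν x * (A 1 x) ^ 2 ≤ ∑ x, ν x * (4 * (R + 1) ^ 2) := by
          apply Finset.sum_le_sum
          intro x _
          apply mul_le_mul_of_nonneg_left _ (hν0 x).le
          have hb1 : |f 1 x| ≤ R := hFb _ hf1F x
          have hbK : |T (f K) x| ≤ R + 1 :=
            hTb (f K) (hFb _ (hfF K (by simp only [Finset.mem_Icc]; omega))) x
          have : |A 1 x| ≤ 2 * R + 1 := by
            simp only [hAdef, if_pos rfl]
            calc |f 1 x - T (f K) x| ≤ |f 1 x| + |T (f K) x| := abs_sub _ _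
              _ ≤ 2 * R + 1 := by linarith
          nlinarith [abs_nonneg (A 1 x), sq_abs (A 1 x)]
      _ = 4 * (R + 1) ^ 2 := by rw [← Finset.sum_mul, hν1, one_mul]
  have hboundk : ∀ k ∈ Icc 2 K, ∑ x, ν x * (A k x) ^ 2 ≤ ε := by
    intro k hk
    simp only [Finset.mem_Icc] at hk
    have hk1 : k ≠ 1 := by omega
    have : ∀ x, A k x = f k x - T (f (k-1)) x := fun x => by simp [hAdef, hk1]
    simp only [this]
    exact hres k hk.1 hk.2
  -- Jensen step pointwise
  have hJ : ∀ x, (fbar x - T fbar x) ^ 2 ≤ (1 / (K:ℝ)) * ∑ k ∈ Icc 1 K, (A k x) ^ 2 := by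
    intro x
    rw [hid x, mul_pow]
    have hsq : (∑ k ∈ Icc 1 K, A k x) ^ 2 ≤ (Icc 1 K).card * ∑ k ∈ Icc 1 K, (A k x) ^ 2 :=
      sq_sum_le_card_mul_sum_sq
    have hcard : ((Icc 1 K).card : ℝ) = K := by
      rw [Nat.card_Icc]; simp
    rw [hcard] at hsq
    calc (1 / (K:ℝ)) ^ 2 * (∑ k ∈ Icc 1 K, A k x) ^ 2
        ≤ (1 / (K:ℝ)) ^ 2 * ((K:ℝ) * ∑ k ∈ Icc 1 K, (A k x) ^ 2) := by
          apply mul_le_mul_of_nonneg_left hsq (by positivity)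
      _ = (1 / (K:ℝ)) * ∑ k ∈ Icc 1 K, (A k x) ^ 2 := by
          field_simp
  -- expectation under ν
  have key : ∑ x, ν x * (fbar x - T fbar x) ^ 2 ≤ 4 * (R + 1) ^ 2 / K + ε := by
    calc ∑ x, ν x * (fbar x - T fbar x) ^ 2
        ≤ ∑ x, ν x * ((1 / (K:ℝ)) * ∑ k ∈ Icc 1 K, (A k x) ^ 2) := by
          apply Finset.sum_le_sum
          intro x _
          exact mul_le_mul_of_nonneg_left (hJ x) (hν0 x).le
      _ = (1 / (K:ℝ)) * ∑ k ∈ Icc 1 K, ∑ x, ν x * (A k x) ^ 2 := by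
          have hpt : ∀ x : X, ν x * ((1 / (K:ℝ)) * ∑ k ∈ Icc 1 K, (A k x) ^ 2)
              = ∑ k ∈ Icc 1 K, (1 / (K:ℝ)) * (ν x * (A k x) ^ 2) := by
            intro x
            rw [Finset.mul_sum, Finset.mul_sum]
            exact Finset.sum_congr rfl fun k _ => by ring
          simp only [hpt]
          rw [Finset.sum_comm, Finset.mul_sum]
          exact Finset.sum_congr rfl fun k _ => by rw [Finset.mul_sum]
      _ ≤ (1 / (K:ℝ)) * (4 * (R + 1) ^ 2 + (K - 1 : ℕ) * ε) := by
          apply mul_le_mul_of_nonneg_left _ (by positivity)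
          have hsplit : ∑ k ∈ Icc 1 K, ∑ x, ν x * (A k x) ^ 2
              = (∑ x, ν x * (A 1 x) ^ 2) + ∑ k ∈ Icc 2 K, ∑ x, ν x * (A k x) ^ 2 := by
            rw [← Finset.sum_erase_add _ _ (show 1 ∈ Icc 1 K by simp only [Finset.mem_Icc]; omega),
              Finset.Icc_erase_left, ← Finset.Icc_add_one_left_eq_Ioc]
            ring
          rw [hsplit]
          have h2 : ∑ k ∈ Icc 2 K, ∑ x, ν x * (A k x) ^ 2 ≤ (K - 1 : ℕ) * ε := by
            calc ∑ k ∈ Icc 2 K, ∑ x, ν x * (A k x) ^ 2 ≤ ∑ k ∈ Icc 2 K, ε :=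
                  Finset.sum_le_sum hboundk
              _ = (K - 1 : ℕ) * ε := by
                  rw [Finset.sum_const, Nat.card_Icc, nsmul_eq_mul,
                    show K + 1 - 2 = K - 1 from by omega]
          linarith [hbound1]
      _ ≤ 4 * (R + 1) ^ 2 / K + ε := by
          rw [mul_add]
          have h1 : (1 / (K:ℝ)) * (4 * (R + 1) ^ 2) = 4 * (R + 1) ^ 2 / K := by ring
          have h2 : (1 / (K:ℝ)) * ((K - 1 : ℕ) * ε) ≤ ε := by
            have hle : ((K - 1 : ℕ) : ℝ) ≤ K := by
              have : (K - 1 : ℕ) ≤ K := by omega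
              exact_mod_cast this
            calc (1 / (K:ℝ)) * ((K - 1 : ℕ) * ε) ≤ (1 / (K:ℝ)) * ((K:ℝ) * ε) := by
                  apply mul_le_mul_of_nonneg_left _ (by positivity)
                  exact mul_le_mul_of_nonneg_right hle hε0
              _ = ε := by field_simp
          linarith
  -- change of measure
  calc ∑ x, d x * (fbar x - T fbar x) ^ 2
      ≤ ∑ x, C * ν x * (fbar x - T fbar x) ^ 2 := by
        apply Finset.sum_le_sum
        intro x _
        exact mul_le_mul_of_nonneg_right (hdC x) (sq_nonneg _)
    _ = C * ∑ x, ν x * (fbar x - T fbar x) ^ 2 := by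
        rw [Finset.mul_sum]
        apply Finset.sum_congr rfl
        intro x _
        ring
    _ ≤ C * (4 * (R + 1) ^ 2 / K + ε) := mul_le_mul_of_nonneg_left key hC0
end
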